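/- Under the identification of the extended affine Weyl group of type A with n-periodic bijections of Z, the bounded affine permutations B = {f : Z → Z bijection : f(i+n) = f(i)+n, (1/n)Σ_{i=1}^n (f(i)−i) = k, and i ≤ f(i) ≤ i+n for all i} are exactly the elements of the form f = u·t_λ·w⁻¹ where λ = e_1+...+e_k, u, w ∈ S_n with u ≤_P w in the extended P-Bruhat order for W_P = S_k × S_{n−k}. -/

import Mathlib

/-!
STATEMENT 12: Under the identification of the extended affine Weyl group of type `A` with
`n`-periodic bijections of `ℤ` (`w t_λ ↦ (i ↦ w(i) + λ_i n)` on `0 ≤ i < n`, extended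
periodically), the bounded affine permutations
`B = {f : f(i+n) = f(i)+n, (1/n)Σ_{i<n}(f(i)−i) = k, i ≤ f(i) ≤ i+n}` are exactly the
elements `f = u·t_λ·w⁻¹` with `λ = e_1 + ⋯ + e_k`, `u, w ∈ S_n` and `u ≤_P w` in the
extended `P`-Bruhat (= extended `k`-Bruhat) order for `W_P = S_k × S_{n−k}`.
-/

open Equiv

variable (n : ℕ) [NeZero n]

/-- The residue of `i : ℤ` modulo `n`, as an element of `Fin n`. -/
def residue (i : ℤ) : Fin n :=
  ⟨(i % (n : ℤ)).toNat, by
    have hn : 0 < (n : ℤ) := Int.natCast_pos.mpr (Nat.pos_of_ne_zero (NeZero.ne n))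
    have h1 : 0 ≤ i % (n : ℤ) := Int.emod_nonneg i (by omega)
    have h2 : i % (n : ℤ) < n := Int.emod_lt_of_pos i hn
    omega⟩

/-- The `n`-periodic extension of a permutation of `{0,…,n−1}` to a bijection of `ℤ`. -/
def toAff (w : Perm (Fin n)) (i : ℤ) : ℤ :=
  (n : ℤ) * (i / (n : ℤ)) + ((w (residue n i) : ℕ) : ℤ)

/-- The translation `t_λ` for `λ = e_1 + ⋯ + e_k` as an `n`-periodic bijection of `ℤ`:
`i ↦ i + λ_{i mod n}·n`. -/
def tLamFun (k : ℕ) (i : ℤ) : ℤ :=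
  i + (if ((residue n i : Fin n) : ℕ) < k then (n : ℤ) else 0)

/-- Number of inversions (Coxeter length) of a permutation of `Fin n`. -/
def invLength (u : Perm (Fin n)) : ℕ :=
  (Finset.univ.filter (fun p : Fin n × Fin n => p.1 < p.2 ∧ u p.2 < u p.1)).card

/-- The extended `k`-Bruhat order (= extended `P`-Bruhat order for `W_P = S_k × S_{n−k}`):
transitive closure of `u → u·τ_{ab}` with `a < k ≤ b` (0-indexed) and increasing length. -/
def extKLE (k : ℕ) : Perm (Fin n) → Perm (Fin n) → Prop :=
  Relation.ReflTransGen (fun u w => ∃ a b : Fin n, (a : ℕ) < k ∧ k ≤ (b : ℕ) ∧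
    w = u * Equiv.swap a b ∧ invLength n u < invLength n w)


/-!
A periodic bijection `f` with `i ≤ f i ≤ i + n` is determined by its window: for `0 ≤ m < n`,
`f m = π m + n·[m ∈ C]`, where `π m = f m mod n` defines a permutation and `C = {m | n ≤ f m}`.
The bound says `π m ≤ m` on `C` and `m ≤ π m` off `C`, and the average displacement is `#C`.
Writing `C = w {0, …, k-1}` and `u = π w` gives `f = u t_λ w⁻¹`, and the bound becomes
`u a ≤ w a` for `a < k`, `w a ≤ u a` for `k ≤ a` (`SplitLE`).

This criterion characterises the extended `k`-Bruhat order. A length-increasing swap `τ_{ab}` with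
`a < k ≤ b` raises the value at `a` and lowers the one at `b`. Conversely, if `u ≠ w`, take `a < k`
with `u a < w a` and `u a` maximal; counting the points that `u` and `w` send into `(u a, w a]`
produces `b ≥ k` with `w b ≤ u a < u b ≤ w a`, and `u τ_{ab}` is longer and still satisfies the
criterion, so induction on the length applies.
-/

section Perm

variable {n k : ℕ}

lemma invLength_le (u : Perm (Fin n)) : invLength n u ≤ n * n :=
  (Finset.card_filter_le _ _).trans (by simp)

lemma invLength_mul_swap (v : Perm (Fin n)) (a b : Fin n) :
    invLength n (v * swap a b) =
      (Finset.univ.filter fun p : Fin n × Fin n =>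
        swap a b p.1 < swap a b p.2 ∧ v p.2 < v p.1).card := by
  unfold invLength
  exact Finset.card_equiv ((swap a b).prodCongr (swap a b)) fun p => by
    simp only [Finset.mem_filter, Finset.mem_univ, true_and]
    simp

lemma apply_swap_lt_apply_swap {v : Perm (Fin n)} {a b x y : Fin n} (hab : a < b)
    (hv : v a < v b) (hxy : x < y) (hvxy : v y < v x) (hτ : swap a b y < swap a b x) :
    v (swap a b y) < v (swap a b x) := by
  simp only [swap_apply_def] at *
  split_ifs at * <;> subst_vars <;> order

/-- In the coordinates of `invLength_mul_swap`, `τ × τ` (for `τ = swap a b`) sends the inversions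
that are lost injectively to gained ones other than `(b, a)`. -/
lemma invLength_lt_mul_swap {v : Perm (Fin n)} {a b : Fin n} (hab : a < b) (hv : v a < v b) :
    invLength n v < invLength n (v * swap a b) := by
  set S := Finset.univ.filter fun p : Fin n × Fin n => p.1 < p.2 ∧ v p.2 < v p.1
  set T := Finset.univ.filter fun p : Fin n × Fin n =>
    swap a b p.1 < swap a b p.2 ∧ v p.2 < v p.1
  have hba : (b, a) ∈ T \ S := by simp [S, T, hab, hv, hab.not_gt]
  have hmaps : Set.MapsTo (Prod.map (swap a b) (swap a b)) (S \ T : Finset _)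
      ((T \ S).erase (b, a)) := by
    rintro ⟨x, y⟩ hp
    simp only [Finset.mem_coe, Finset.mem_sdiff, S, T, Finset.mem_filter, Finset.mem_univ,
      true_and] at hp
    obtain ⟨⟨hxy, hvxy⟩, hτ⟩ := hp
    have hτ : swap a b y < swap a b x :=
      lt_of_le_of_ne (not_lt.1 fun h => hτ ⟨h, hvxy⟩) ((swap a b).injective.ne hxy.ne')
    simp only [Finset.mem_coe, Prod.map, Finset.mem_erase, Finset.mem_sdiff, S, T,
      Finset.mem_filter, Finset.mem_univ, true_and, swap_apply_self, ne_eq, Prod.mk.injEq]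
    refine ⟨fun ⟨hx, hy⟩ => ?_, ⟨hxy, apply_swap_lt_apply_swap hab hv hxy hvxy hτ⟩,
      fun h => hτ.not_gt h.1⟩
    rw [swap_apply_eq_iff, swap_apply_right] at hx
    rw [swap_apply_eq_iff, swap_apply_left] at hy
    subst hx hy
    exact hv.not_gt hvxy
  have hcard := Finset.card_le_card_of_injOn _ hmaps
    ((swap a b).injective.prodMap (swap a b).injective).injOn
  rw [Finset.card_erase_of_mem hba] at hcard
  have hS := Finset.card_sdiff_add_card_inter S T
  have hT := Finset.card_sdiff_add_card_inter T S
  have hpos := Finset.card_pos.2 ⟨_, hba⟩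
  rw [Finset.inter_comm] at hT
  rw [invLength_mul_swap]
  change S.card < T.card
  omega

lemma apply_lt_apply_of_invLength_lt {v : Perm (Fin n)} {a b : Fin n} (hab : a < b)
    (h : invLength n v < invLength n (v * swap a b)) : v a < v b := by
  refine lt_of_le_of_ne (not_lt.1 fun hba => ?_) (v.injective.ne hab.ne)
  have := invLength_lt_mul_swap (v := v * swap a b) hab (by simpa using hba)
  rw [mul_assoc, swap_mul_self, mul_one] at this
  exact lt_asymm h this

lemma Equiv.Perm.eq_of_forall_apply_le {u w : Perm (Fin n)} (h : ∀ a, w a ≤ u a) : u = w := by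
  have hsum : ∑ a, (w a : ℕ) = ∑ a, (u a : ℕ) := by
    rw [Equiv.sum_comp w (fun x : Fin n => (x : ℕ)), Equiv.sum_comp u (fun x : Fin n => (x : ℕ))]
  have heq := (Finset.sum_eq_sum_iff_of_le fun a _ => Fin.le_iff_val_le_val.1 (h a)).1 hsum
  ext a
  exact (heq a (Finset.mem_univ a)).symm

def SplitLE (k : ℕ) (u w : Perm (Fin n)) : Prop :=
  ∀ a : Fin n, ((a : ℕ) < k → u a ≤ w a) ∧ (k ≤ (a : ℕ) → w a ≤ u a)

lemma splitLE_self_mul_swap {v : Perm (Fin n)} {a b : Fin n} (ha : (a : ℕ) < k)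
    (hb : k ≤ (b : ℕ)) (hv : v a ≤ v b) : SplitLE k v (v * swap a b) := by
  intro c
  rcases eq_or_ne c a with rfl | hca
  · simpa [ha, hb.not_gt] using hv
  rcases eq_or_ne c b with rfl | hcb
  · simpa [hb, ha.not_ge] using hv
  simp [swap_apply_of_ne_of_ne hca hcb]

namespace SplitLE

variable {u v w : Perm (Fin n)}

lemma refl (u : Perm (Fin n)) : SplitLE k u u := fun _ => ⟨fun _ => le_rfl, fun _ => le_rfl⟩

lemma trans (huv : SplitLE k u v) (hvw : SplitLE k v w) : SplitLE k u w := fun a =>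
  ⟨fun ha => ((huv a).1 ha).trans ((hvw a).1 ha), fun ha => ((hvw a).2 ha).trans ((huv a).2 ha)⟩

lemma of_extKLE (h : extKLE n k u w) : SplitLE k u w := by
  induction h with
  | refl => exact .refl u
  | tail _ hstep ih =>
    obtain ⟨a, b, ha, hb, rfl, hlen⟩ := hstep
    have hab : a < b := Fin.lt_def.2 (by omega)
    exact ih.trans (splitLE_self_mul_swap ha hb (apply_lt_apply_of_invLength_lt hab hlen).le)

lemma mul_swap (h : SplitLE k u w) {a b : Fin n} (ha : (a : ℕ) < k) (hb : k ≤ (b : ℕ))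
    (hwb : w b ≤ u a) (hbw : u b ≤ w a) : SplitLE k (u * swap a b) w := by
  intro c
  rcases eq_or_ne c a with rfl | hca
  · simpa [ha, hb.not_gt] using hbw
  rcases eq_or_ne c b with rfl | hcb
  · simpa [hb, ha.not_ge] using hwb
  simpa [swap_apply_of_ne_of_ne hca hcb] using h c

lemma exists_swap (h : SplitLE k u w) (hne : u ≠ w) :
    ∃ a b : Fin n, (a : ℕ) < k ∧ k ≤ (b : ℕ) ∧ w b ≤ u a ∧ u a < u b ∧ u b ≤ w a := by
  set D := Finset.univ.filter fun a : Fin n => (a : ℕ) < k ∧ u a < w a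
  have hD : D.Nonempty := by
    by_contra hD
    refine hne (Equiv.Perm.eq_of_forall_apply_le fun a => ?_)
    by_cases ha : (a : ℕ) < k
    · exact not_lt.1 fun hlt => hD ⟨a, by simp [D, ha, hlt]⟩
    · exact (h a).2 (not_lt.1 ha)
  obtain ⟨a, haD, hmax⟩ := D.exists_max_image u hD
  simp only [D, Finset.mem_filter, Finset.mem_univ, true_and] at haD hmax
  obtain ⟨hak, hauw⟩ := haD
  set V := Finset.Ioc (u a) (w a)
  -- `u` and `w` both send `#V` points into `V`, and `w` sends `a` there but `u` does not
  obtain ⟨b, hbu, hbw⟩ : ∃ b, u b ∈ V ∧ w b ∉ V := by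
    by_contra! hcon
    have hcard : ∀ v : Perm (Fin n), (Finset.univ.filter fun b => v b ∈ V).card = V.card :=
      fun v => Finset.card_equiv v (by simp)
    have hsub := Finset.eq_of_subset_of_card_le (s := Finset.univ.filter fun b => u b ∈ V)
      (t := Finset.univ.filter fun b => w b ∈ V) (fun b => by simpa using hcon b)
      (by rw [hcard, hcard])
    have ha := Finset.ext_iff.1 hsub a
    simp [V, hauw] at ha
  simp only [V, Finset.mem_Ioc, not_and_or, not_lt, not_le] at hbu hbw
  obtain ⟨hab, hbw'⟩ := hbu
  have hwb : w b ≤ u a := by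
    refine hbw.resolve_right fun hwb => ?_
    by_cases hbk : (b : ℕ) < k
    · exact (hmax b ⟨hbk, hbw'.trans_lt hwb⟩).not_gt hab
    · exact ((h b).2 (not_lt.1 hbk)).not_gt (hbw'.trans_lt hwb)
  have hbk : k ≤ (b : ℕ) := not_lt.1 fun hbk => ((h b).1 hbk |>.trans hwb).not_gt hab
  exact ⟨a, b, hak, hbk, hwb, hab, hbw'⟩

end SplitLE

lemma SplitLE.extKLE {u w : Perm (Fin n)} (h : SplitLE k u w) : extKLE n k u w := by
  by_cases huw : u = w
  · exact huw ▸ .refl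
  obtain ⟨a, b, ha, hb, hwb, hab, hbw⟩ := h.exists_swap huw
  have hlen := invLength_lt_mul_swap (Fin.lt_def.2 (by omega)) hab
  exact .head ⟨a, b, ha, hb, rfl, hlen⟩ (h.mul_swap ha hb hwb hbw).extKLE
termination_by n * n - invLength n u
decreasing_by have := invLength_le (u * swap a b); omega

theorem extKLE_iff_splitLE {u w : Perm (Fin n)} : extKLE n k u w ↔ SplitLE k u w :=
  ⟨.of_extKLE, SplitLE.extKLE⟩

lemma splitLE_iff_of_lt_iff_mem {C : Finset (Fin n)} {u w : Perm (Fin n)}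
    (hw : ∀ a : Fin n, (a : ℕ) < k ↔ w a ∈ C) :
    SplitLE k u w ↔ ∀ m, (m ∈ C → (u * w⁻¹) m ≤ m) ∧ (m ∉ C → m ≤ (u * w⁻¹) m) := by
  rw [← w.forall_congr_right]
  simp only [SplitLE, Perm.mul_apply, Perm.coe_inv, symm_apply_apply, ← hw, not_lt]

lemma exists_perm_lt_iff_mem_iff_card_eq (hk : k ≤ n) (C : Finset (Fin n)) :
    (∃ w : Perm (Fin n), ∀ a : Fin n, (a : ℕ) < k ↔ w a ∈ C) ↔ C.card = k := by
  have hA : (Finset.univ.filter fun a : Fin n => (a : ℕ) < k).card = k := by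
    rw [Fin.card_filter_val_lt, min_eq_right hk]
  constructor
  · rintro ⟨w, hw⟩
    rw [← hA]
    exact (Finset.card_equiv w (by simp [hw])).symm
  · intro hC
    have e : {a : Fin n // (a : ℕ) < k} ≃ {m // m ∈ C} :=
      Fintype.equivOfCardEq (by rw [Fintype.card_subtype, hA, Fintype.card_coe, hC])
    have e' : {a : Fin n // ¬(a : ℕ) < k} ≃ {m // m ∉ C} :=
      Fintype.equivOfCardEq (by rw [Fintype.card_subtype_compl, Fintype.card_subtype_compl,
        Fintype.card_subtype, hA, Fintype.card_coe, hC])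
    refine ⟨e.subtypeCongr e', fun a => ?_⟩
    by_cases ha : (a : ℕ) < k
    · simp [Equiv.subtypeCongr, ha]
    · simpa [Equiv.subtypeCongr, ha] using (e' ⟨a, ha⟩).2

end Perm

variable {n}

lemma coe_residue (i : ℤ) : ((residue n i : ℕ) : ℤ) = i % n := by
  have : 0 ≤ i % (n : ℤ) := Int.emod_nonneg i (by exact_mod_cast NeZero.ne n)
  simp [residue, this]

lemma mul_ediv_add_residue (i : ℤ) : n * (i / n) + residue n i = i := by
  rw [coe_residue, Int.mul_ediv_add_emod]

lemma residue_mul_add (q : ℤ) (m : Fin n) : residue n (n * q + m) = m := by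
  have hm : ((m : ℕ) : ℤ) < n := by exact_mod_cast m.isLt
  ext
  rw [← Int.natCast_inj, coe_residue, add_comm, Int.add_mul_emod_self_left,
    Int.emod_eq_of_lt (by positivity) hm]

lemma mul_add_inj {q q' : ℤ} {m m' : Fin n} :
    n * q + m = n * q' + m' ↔ q = q' ∧ m = m' := by
  refine ⟨fun h => ?_, fun ⟨hq, hm⟩ => hq ▸ hm ▸ rfl⟩
  obtain rfl : m = m' := by rw [← residue_mul_add q m, h, residue_mul_add]
  exact ⟨mul_left_cancel₀ (by exact_mod_cast NeZero.ne n) (add_right_cancel h), rfl⟩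

lemma mul_add_ediv (q : ℤ) (m : Fin n) : (n * q + m : ℤ) / n = q := by
  have h := mul_ediv_add_residue (n := n) (n * q + m)
  rw [residue_mul_add] at h
  exact ((mul_add_inj (n := n)).1 h).1

lemma exists_mul_add (i : ℤ) : ∃ (q : ℤ) (m : Fin n), n * q + m = i :=
  ⟨_, _, mul_ediv_add_residue i⟩

lemma forall_mul_add_iff {P : ℤ → Prop} : (∀ i, P i) ↔ ∀ (q : ℤ) (m : Fin n), P (n * q + m) :=
  ⟨fun h _ _ => h _, fun h i => mul_ediv_add_residue (n := n) i ▸ h _ _⟩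

lemma toAff_mul_add (w : Perm (Fin n)) (q : ℤ) (m : Fin n) :
    toAff n w (n * q + m) = n * q + w m := by
  rw [toAff, residue_mul_add, mul_add_ediv]

lemma tLamFun_mul_add (k : ℕ) (q : ℤ) (m : Fin n) :
    tLamFun n k (n * q + m) = n * (q + if (m : ℕ) < k then 1 else 0) + m := by
  rw [tLamFun, residue_mul_add]
  split_ifs <;> ring

omit [NeZero n] in
lemma apply_mul_add_of_periodic {f : ℤ → ℤ} (hf : ∀ i, f (i + n) = f i + n) (i q : ℤ) :
    f (n * q + i) = n * q + f i := by
  induction q using Int.induction_on with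
  | zero => simp
  | succ q ih => rw [mul_add_one, add_right_comm, hf, ih]; ring
  | pred q ih =>
    have h := hf (n * (-q - 1) + i)
    rw [show n * (-q - 1) + i + n = n * -q + i by ring, ih] at h
    linarith

lemma injective_residue_of_periodic {f : ℤ → ℤ} (hinj : Function.Injective f)
    (hf : ∀ i, f (i + n) = f i + n) : Function.Injective fun m : Fin n => residue n (f m) := by
  intro m m' h
  have hm := mul_ediv_add_residue (n := n) (f m)
  have hm' := mul_ediv_add_residue (n := n) (f m')
  have hfm : f m = f (n * (f m / n - f m' / n) + m') := by
    rw [apply_mul_add_of_periodic hf]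
    simp only at h
    rw [h] at hm
    linarith
  have := hinj hfm
  rw [← zero_add ((m : ℕ) : ℤ), ← mul_zero (n : ℤ), mul_add_inj (n := n)] at this
  exact this.2

/-- The `n`-periodic map with window `m ↦ π m + n·[m ∈ C]` on `{0, …, n-1}`. -/
def windowMap (π : Perm (Fin n)) (C : Finset (Fin n)) (i : ℤ) : ℤ :=
  n * (i / n + if residue n i ∈ C then 1 else 0) + π (residue n i)

section windowMap

variable (π : Perm (Fin n)) (C : Finset (Fin n))

lemma windowMap_mul_add (q : ℤ) (m : Fin n) :
    windowMap π C (n * q + m) = n * (q + if m ∈ C then 1 else 0) + π m := by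
  rw [windowMap, residue_mul_add, mul_add_ediv]

lemma windowMap_coe (m : Fin n) :
    windowMap π C m = n * (if m ∈ C then 1 else 0) + π m := by
  simpa using windowMap_mul_add π C 0 m

lemma windowMap_add_self (i : ℤ) : windowMap π C (i + n) = windowMap π C i + n := by
  obtain ⟨q, m, rfl⟩ := exists_mul_add (n := n) i
  rw [add_right_comm, ← mul_add_one, windowMap_mul_add, windowMap_mul_add]
  ring

lemma windowMap_bijective : Function.Bijective (windowMap π C) := by
  refine ⟨fun i j hij => ?_, fun j => ?_⟩
  · obtain ⟨q, m, rfl⟩ := exists_mul_add (n := n) i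
    obtain ⟨q', m', rfl⟩ := exists_mul_add (n := n) j
    rw [windowMap_mul_add, windowMap_mul_add, mul_add_inj] at hij
    obtain rfl : m = m' := π.injective hij.2
    rw [add_left_inj] at hij
    rw [hij.1]
  · obtain ⟨q, m, rfl⟩ := exists_mul_add (n := n) j
    refine ⟨n * (q - if π.symm m ∈ C then 1 else 0) + π.symm m, ?_⟩
    rw [windowMap_mul_add, sub_add_cancel, Equiv.apply_symm_apply]

lemma windowMap_sum :
    ∑ i ∈ Finset.range n, (windowMap π C i - i) = (C.card : ℤ) * n := by
  have hπ : ∑ m : Fin n, ((π m : ℕ) : ℤ) = ∑ m : Fin n, ((m : ℕ) : ℤ) :=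
    Equiv.sum_comp π fun m => ((m : ℕ) : ℤ)
  rw [← Fin.sum_univ_eq_sum_range (fun i => windowMap π C i - i)]
  simp only [windowMap_coe, Finset.sum_sub_distrib, Finset.sum_add_distrib, hπ,
    ← Finset.mul_sum, Finset.sum_boole, Finset.filter_mem_eq_inter, Finset.univ_inter]
  ring

lemma windowMap_bounded_iff :
    (∀ i : ℤ, i ≤ windowMap π C i ∧ windowMap π C i ≤ i + n) ↔
      ∀ m : Fin n, (m ∈ C → π m ≤ m) ∧ (m ∉ C → m ≤ π m) := by
  have hwindow : ∀ (q : ℤ) (m : Fin n),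
      (n * q + m ≤ windowMap π C (n * q + m) ∧ windowMap π C (n * q + m) ≤ n * q + m + n) ↔
        ((m ∈ C → π m ≤ m) ∧ (m ∉ C → m ≤ π m)) := by
    intro q m
    have := m.isLt
    have := (π m).isLt
    rw [windowMap_mul_add]
    by_cases h : m ∈ C <;> simp [h, mul_add] <;> omega
  rw [forall_mul_add_iff (n := n)]
  exact ⟨fun H m => (hwindow 0 m).1 (H 0 m), fun H q m => (hwindow q m).2 (H m)⟩

end windowMap

lemma exists_eq_windowMap {f : ℤ → ℤ} (hinj : Function.Injective f)
    (hf : ∀ i, f (i + n) = f i + n) (hbdd : ∀ i, i ≤ f i ∧ f i ≤ i + n) :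
    ∃ (π : Perm (Fin n)) (C : Finset (Fin n)), f = windowMap π C := by
  refine ⟨.ofBijective _ (Finite.injective_iff_bijective.mp (injective_residue_of_periodic hinj hf)),
    Finset.univ.filter fun m : Fin n => (n : ℤ) ≤ f m, funext fun i => ?_⟩
  obtain ⟨q, m, rfl⟩ := exists_mul_add (n := n) i
  have hquot : f m / n = if (n : ℤ) ≤ f m then 1 else 0 := by
    have := hbdd m
    have := m.isLt
    rw [Int.ediv_eq_iff_of_pos (by exact_mod_cast Nat.pos_of_neZero n)]
    split_ifs <;> omega
  rw [apply_mul_add_of_periodic hf, windowMap_mul_add]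
  simp only [Finset.mem_filter, Finset.mem_univ, true_and, Equiv.ofBijective_apply, ← hquot]
  rw [mul_add, add_assoc, mul_ediv_add_residue]

lemma toAff_comp_tLamFun_comp_toAff {k : ℕ} {C : Finset (Fin n)} (u : Perm (Fin n))
    {w : Perm (Fin n)} (hw : ∀ a : Fin n, (a : ℕ) < k ↔ w a ∈ C) :
    toAff n u ∘ tLamFun n k ∘ toAff n w⁻¹ = windowMap (u * w⁻¹) C := by
  funext i
  obtain ⟨q, m, rfl⟩ := exists_mul_add (n := n) i
  simp [toAff_mul_add, tLamFun_mul_add, windowMap_mul_add, hw]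

theorem boundedAffine_iff (k : ℕ) (hk : k ≤ n) (f : ℤ → ℤ) :
    (Function.Bijective f ∧ (∀ i : ℤ, f (i + n) = f i + n) ∧
      (∑ i ∈ Finset.range n, (f i - i)) = (k : ℤ) * n ∧
      (∀ i : ℤ, i ≤ f i ∧ f i ≤ i + n)) ↔
    ∃ u w : Perm (Fin n), extKLE n k u w ∧
      f = toAff n u ∘ tLamFun n k ∘ toAff n w⁻¹ := by
  constructor
  · rintro ⟨hbij, hf, hsum, hbdd⟩
    obtain ⟨π, C, rfl⟩ := exists_eq_windowMap hbij.1 hf hbdd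
    rw [windowMap_sum] at hsum
    have hC : C.card = k := by
      exact_mod_cast mul_right_cancel₀ (by exact_mod_cast NeZero.ne n : (n : ℤ) ≠ 0) hsum
    obtain ⟨w, hw⟩ := (exists_perm_lt_iff_mem_iff_card_eq hk C).2 hC
    refine ⟨π * w, w, extKLE_iff_splitLE.2 ?_, ?_⟩
    · rw [splitLE_iff_of_lt_iff_mem hw, mul_inv_cancel_right]
      exact (windowMap_bounded_iff π C).1 hbdd
    · rw [toAff_comp_tLamFun_comp_toAff _ hw, mul_inv_cancel_right]
  · rintro ⟨u, w, huw, rfl⟩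
    set C := Finset.univ.filter fun m : Fin n => ((w⁻¹ m : Fin n) : ℕ) < k
    have hw : ∀ a : Fin n, (a : ℕ) < k ↔ w a ∈ C := by simp [C]
    rw [toAff_comp_tLamFun_comp_toAff u hw, windowMap_sum, windowMap_bounded_iff,
      ← splitLE_iff_of_lt_iff_mem hw, (exists_perm_lt_iff_mem_iff_card_eq hk C).1 ⟨w, hw⟩]
    exact ⟨windowMap_bijective _ _, windowMap_add_self _ _, rfl, extKLE_iff_splitLE.1 huw⟩
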